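/- In BS(p,q) = ⟨a,t | t a^p t⁻¹ = a^q⟩ with 1 ≤ p < q, for every integer N > 0 the element a^N has word length at most (q+1)·log_{q/p} N + q with respect to the generators {a^{±1}, t^{±1}}. -/

import Mathlib

def bsRel (p q : ℕ) : Set (FreeGroup Bool) :=
  {FreeGroup.of true * FreeGroup.of false ^ p * (FreeGroup.of true)⁻¹ * (FreeGroup.of false ^ q)⁻¹}

/-- The Baumslag–Solitar group BS(p,q) = ⟨a,t | t a^p t⁻¹ = a^q⟩. -/
abbrev BS (p q : ℕ) : Type := PresentedGroup (bsRel p q)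

def BS.a (p q : ℕ) : BS p q := PresentedGroup.of false
def BS.t (p q : ℕ) : BS p q := PresentedGroup.of true

/-- The symmetric generating set {a, a⁻¹, t, t⁻¹}. -/
def genSet (p q : ℕ) : Set (BS p q) := {BS.a p q, (BS.a p q)⁻¹, BS.t p q, (BS.t p q)⁻¹}

/-- Word length with respect to {a^{±1}, t^{±1}}. -/
noncomputable def wlen (p q : ℕ) (x : BS p q) : ℕ :=
  sInf {n | ∃ l : List (BS p q), l.length = n ∧ (∀ g ∈ l, g ∈ genSet p q) ∧ l.prod = x}

/-- The syllable a^j t^{±1} : `(j, true)` ↦ a^j t, `(j, false)` ↦ a^j t⁻¹. -/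
def syl (p q : ℕ) (s : ℕ × Bool) : BS p q :=
  BS.a p q ^ s.1 * if s.2 then BS.t p q else (BS.t p q)⁻¹

/-!
Write `N = q m + r` with `0 ≤ r < q`. The defining relation gives `a^N = a^r · t a^{p m} t⁻¹`,
so `|a^N| ≤ |a^{p m}| + r + 2 ≤ |a^{p m}| + q + 1`, and `p m ≤ (p/q) N`. Iterating shrinks the
exponent by the factor `q/p` at a cost of at most `q + 1` per step, about `log_{q/p} N` times,
until the exponent drops below `q`, where `|a^N| ≤ N < q`.
-/

open Real

theorem le_mul_logb_add_of_recurrence {f : ℕ → ℝ} {b c C : ℝ} (hb : 1 < b) (hc : 0 ≤ c)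
    (hf : ∀ N, 0 < N → f N ≤ C ∨ ∃ M : ℕ, 0 < M ∧ b * M ≤ N ∧ f N ≤ f M + c) :
    ∀ N, 0 < N → f N ≤ c * logb b N + C := by
  intro N
  induction N using Nat.strong_induction_on with
  | _ N ih =>
  intro hN
  have hN1 : (1 : ℝ) ≤ N := by exact_mod_cast hN
  rcases hf N hN with hbase | ⟨M, hM, hbM, hstep⟩
  · nlinarith [logb_nonneg hb hN1]
  · have hM0 : (0 : ℝ) < M := by exact_mod_cast hM
    have hMN : M < N := by exact_mod_cast (lt_mul_of_one_lt_left hM0 hb).trans_le hbM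
    have hlog : logb b M + 1 ≤ logb b N := by
      calc logb b M + 1 = logb b (b * M) := by
            rw [logb_mul (by positivity) hM0.ne', logb_self_eq_one hb, add_comm]
        _ ≤ logb b N := logb_le_logb_of_le hb (by positivity) hbM
    calc f N ≤ c * logb b M + C + c := by linarith [ih M hMN hM]
      _ = c * (logb b M + 1) + C := by ring
      _ ≤ c * logb b N + C := by gcongr

namespace BS

variable {p q : ℕ}

theorem t_mul_a_pow_mul_t_inv : t p q * a p q ^ p * (t p q)⁻¹ = a p q ^ q := by
  have h : PresentedGroup.mk (bsRel p q)
      (FreeGroup.of true * FreeGroup.of false ^ p * (FreeGroup.of true)⁻¹ *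
        (FreeGroup.of false ^ q)⁻¹) = 1 :=
    (QuotientGroup.eq_one_iff _).mpr (Subgroup.subset_normalClosure rfl)
  simp only [map_mul, map_pow, map_inv] at h
  exact mul_inv_eq_one.mp h

theorem a_pow_mul_add (m r : ℕ) :
    a p q ^ (q * m + r) = a p q ^ r * (t p q * a p q ^ (p * m) * (t p q)⁻¹) := by
  rw [add_comm, pow_add, pow_mul (a p q) q, ← t_mul_a_pow_mul_t_inv, conj_pow, pow_mul]

theorem submonoid_closure_genSet_eq_top : Submonoid.closure (genSet p q) = ⊤ := by
  have hgen : genSet p q = Set.range (PresentedGroup.of (rels := bsRel p q)) ∪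
      (Set.range (PresentedGroup.of (rels := bsRel p q)))⁻¹ := by
    ext x
    simp only [genSet, a, t, Set.mem_union, Set.mem_range, Set.mem_inv, Bool.exists_bool,
      Set.mem_insert_iff, Set.mem_singleton_iff, ← inv_eq_iff_eq_inv, eq_comm (b := x)]
    tauto
  rw [hgen, ← Subgroup.closure_toSubmonoid, PresentedGroup.closure_range_of]
  rfl

theorem exists_word (x : BS p q) :
    ∃ l : List (BS p q), (∀ g ∈ l, g ∈ genSet p q) ∧ l.prod = x :=
  Submonoid.exists_list_of_mem_closure (submonoid_closure_genSet_eq_top ▸ Submonoid.mem_top x)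

theorem exists_word_length_eq_wlen (x : BS p q) :
    ∃ l : List (BS p q), l.length = wlen p q x ∧ (∀ g ∈ l, g ∈ genSet p q) ∧ l.prod = x := by
  obtain ⟨l, hl, hx⟩ := exists_word x
  exact Nat.sInf_mem (s := {n | ∃ l : List (BS p q), l.length = n ∧
    (∀ g ∈ l, g ∈ genSet p q) ∧ l.prod = x}) ⟨l.length, l, rfl, hl, hx⟩

theorem wlen_le_length {x : BS p q} {l : List (BS p q)} (hl : ∀ g ∈ l, g ∈ genSet p q)
    (hx : l.prod = x) : wlen p q x ≤ l.length :=
  Nat.sInf_le ⟨l, rfl, hl, hx⟩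

theorem wlen_mul_le (x y : BS p q) : wlen p q (x * y) ≤ wlen p q x + wlen p q y := by
  obtain ⟨l, hlen, hl, hx⟩ := exists_word_length_eq_wlen x
  obtain ⟨l', hlen', hl', hy⟩ := exists_word_length_eq_wlen y
  rw [← hlen, ← hlen', ← List.length_append]
  exact wlen_le_length (by simpa [or_imp, forall_and] using And.intro hl hl')
    (by rw [List.prod_append, hx, hy])

theorem wlen_le_one {g : BS p q} (hg : g ∈ genSet p q) : wlen p q g ≤ 1 :=
  wlen_le_length (l := [g]) (by simpa using hg) (List.prod_singleton)

theorem wlen_a_pow_le (k : ℕ) : wlen p q (a p q ^ k) ≤ k := by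
  induction k with
  | zero => exact wlen_le_length (l := []) (by simp) (by simp)
  | succ k ih =>
    rw [pow_succ]
    exact (wlen_mul_le _ _).trans (add_le_add ih (wlen_le_one (by simp [genSet])))

theorem wlen_a_pow_le_wlen_a_pow_mul_div_add (hq : 0 < q) (N : ℕ) :
    wlen p q (a p q ^ N) ≤ wlen p q (a p q ^ (p * (N / q))) + (q + 1) := by
  have hr : N % q < q := Nat.mod_lt N hq
  have hN := a_pow_mul_add (p := p) (q := q) (N / q) (N % q)
  rw [Nat.div_add_mod] at hN
  rw [hN]
  have hr' := wlen_a_pow_le (p := p) (q := q) (N % q)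
  have ht : wlen p q (t p q) ≤ 1 := wlen_le_one (by simp [genSet])
  have ht' : wlen p q (t p q)⁻¹ ≤ 1 := wlen_le_one (by simp [genSet])
  have h₁ := wlen_mul_le (a p q ^ (N % q)) (t p q * a p q ^ (p * (N / q)) * (t p q)⁻¹)
  have h₂ := wlen_mul_le (t p q * a p q ^ (p * (N / q))) (t p q)⁻¹
  have h₃ := wlen_mul_le (t p q) (a p q ^ (p * (N / q)))
  omega

end BS

/-- In BS(p,q) with 1 ≤ p < q, for every integer N > 0 the element a^N has word
length at most (q+1)·log_{q/p} N + q. -/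
theorem stmt12 (p q : ℕ) (hp : 1 ≤ p) (hpq : p < q) (N : ℕ) (hN : 0 < N) :
    (wlen p q (BS.a p q ^ N) : ℝ) ≤
      ((q : ℝ) + 1) * Real.logb ((q : ℝ) / p) N + q := by
  have hp0 : (0 : ℝ) < p := by exact_mod_cast hp
  have hb : 1 < (q : ℝ) / p := by rw [one_lt_div hp0]; exact_mod_cast hpq
  refine le_mul_logb_add_of_recurrence (f := fun N ↦ (wlen p q (BS.a p q ^ N) : ℝ)) hb
    (by positivity) (fun N hN ↦ ?_) N hN
  rcases lt_or_ge N q with hNq | hqN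
  · left
    exact_mod_cast (BS.wlen_a_pow_le N).trans hNq.le
  · right
    have hq : 0 < q := by omega
    refine ⟨p * (N / q), Nat.mul_pos hp (Nat.div_pos hqN hq), ?_, ?_⟩
    · rw [Nat.cast_mul, ← mul_assoc, div_mul_cancel₀ _ hp0.ne']
      exact_mod_cast Nat.mul_div_le N q
    · exact_mod_cast BS.wlen_a_pow_le_wlen_a_pow_mul_div_add hq N
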